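/- arXiv:1612.03800 — 4 statements merged into one kernel-verified Lean document; each statement's English description precedes it below -/
import Mathlib

section
/- Fix n and 1 ≤ k < n, and let Σ_n^{(k)} be the full subposet of Σ_n on pairs (i, j) with j − i ≤ k. For any (i, j) ∈ Σ_n with j − i = k + 1, the inclusion of the three-element subposet {(i, j−1) ≤ (i+1, j−1) ≥ (i+1, j)} into the coslice poset {(i', j') ∈ Σ_n^{(k)} : (i, j) ≤ (i', j')} is an initial functor (i.e. for every object x of the coslice, the comma category of objects of the three-element poset lying below x is nonempty and connected). -/
/-- The poset `Σ_n`: pairs `(i, j)` of naturals with `i ≤ j ≤ n`. -/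
def SigmaP (n : ℕ) : Type := {p : ℕ × ℕ // p.1 ≤ p.2 ∧ p.2 ≤ n}

/-- The order on `Σ_n`: `(i, j) ≤ (i', j')` iff `i ≤ i'` and `j ≥ j'`. -/
def sle {n : ℕ} (x y : SigmaP n) : Prop := x.1.1 ≤ y.1.1 ∧ y.1.2 ≤ x.1.2

theorem stmt4 (n k i : ℕ) (hk1 : 1 ≤ k) (hkn : k < n) (hn : i + k + 1 ≤ n) :
    -- the three-element subposet {(i, j-1) ≤ (i+1, j-1) ≥ (i+1, j)} for j = i + k + 1
    let T : SigmaP n → Prop := fun a =>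
      a = (⟨(i, i + k), by omega, by omega⟩ : SigmaP n) ∨
      a = (⟨(i + 1, i + k), by omega, by omega⟩ : SigmaP n) ∨
      a = (⟨(i + 1, i + k + 1), by omega, hn⟩ : SigmaP n)
    -- for every object b of the coslice {(i', j') ∈ Σ_n^{(k)} : (i, j) ≤ (i', j')},
    -- the comma poset {a ∈ T : a ≤ b} is nonempty and connected
    ∀ b : SigmaP n, b.1.2 - b.1.1 ≤ k →
      sle (⟨(i, i + k + 1), by omega, hn⟩ : SigmaP n) b →
        (∃ a : SigmaP n, T a ∧ sle a b) ∧
        (∀ a a' : SigmaP n, T a → sle a b → T a' → sle a' b →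
          Relation.ReflTransGen
            (fun p q => (T p ∧ sle p b) ∧ (T q ∧ sle q b) ∧ (sle p q ∨ sle q p)) a a') := by
  intro T b hb hle
  obtain ⟨hle1, hle2⟩ := hle
  have hbw : b.1.1 ≤ b.1.2 := b.2.1
  simp only [sle] at hle1 hle2 ⊢
  constructor
  · by_cases hj : b.1.2 ≤ i + k
    · by_cases hi : i + 1 ≤ b.1.1
      · exact ⟨_, Or.inr (Or.inl rfl), hi, hj⟩
      · exact ⟨_, Or.inl rfl, (by omega : i ≤ b.1.1), hj⟩
    · exact ⟨_, Or.inr (Or.inr rfl), (by omega : i + 1 ≤ b.1.1),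
        (by omega : b.1.2 ≤ i + k + 1)⟩
  · intro a a' ha hab ha' hab'
    rcases ha with ha | ha | ha <;> rcases ha' with ha' | ha' | ha' <;> subst ha <;> subst ha'
    · exact Relation.ReflTransGen.refl
    · exact Relation.ReflTransGen.single
        ⟨⟨Or.inl rfl, hab⟩, ⟨Or.inr (Or.inl rfl), hab'⟩, Or.inl ⟨(by omega : i ≤ i + 1), (by omega : i + k ≤ i + k)⟩⟩
    · -- A to C via B
      have hBb : sle (⟨(i + 1, i + k), by omega, by omega⟩ : SigmaP n) b :=
        ⟨hab'.1, hab.2⟩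
      exact Relation.ReflTransGen.head
        ⟨⟨Or.inl rfl, hab⟩, ⟨Or.inr (Or.inl rfl), hBb⟩, Or.inl ⟨(by omega : i ≤ i + 1), (by omega : i + k ≤ i + k)⟩⟩
        (Relation.ReflTransGen.single
          ⟨⟨Or.inr (Or.inl rfl), hBb⟩, ⟨Or.inr (Or.inr rfl), hab'⟩,
            Or.inr ⟨(by omega : i + 1 ≤ i + 1), (by omega : i + k ≤ i + k + 1)⟩⟩)
    · exact Relation.ReflTransGen.single
        ⟨⟨Or.inr (Or.inl rfl), hab⟩, ⟨Or.inl rfl, hab'⟩, Or.inr ⟨(by omega : i ≤ i + 1), (by omega : i + k ≤ i + k)⟩⟩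
    · exact Relation.ReflTransGen.refl
    · exact Relation.ReflTransGen.single
        ⟨⟨Or.inr (Or.inl rfl), hab⟩, ⟨Or.inr (Or.inr rfl), hab'⟩,
          Or.inr ⟨(by omega : i + 1 ≤ i + 1), (by omega : i + k ≤ i + k + 1)⟩⟩
    · -- C to A via B
      have hBb : sle (⟨(i + 1, i + k), by omega, by omega⟩ : SigmaP n) b :=
        ⟨hab.1, hab'.2⟩
      exact Relation.ReflTransGen.head
        ⟨⟨Or.inr (Or.inr rfl), hab⟩, ⟨Or.inr (Or.inl rfl), hBb⟩, Or.inl ⟨(by omega : i + 1 ≤ i + 1), (by omega : i + k ≤ i + k + 1)⟩⟩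
        (Relation.ReflTransGen.single
          ⟨⟨Or.inr (Or.inl rfl), hBb⟩, ⟨Or.inl rfl, hab'⟩, Or.inr ⟨(by omega : i ≤ i + 1), (by omega : i + k ≤ i + k)⟩⟩)
    · exact Relation.ReflTransGen.single
        ⟨⟨Or.inr (Or.inr rfl), hab⟩, ⟨Or.inr (Or.inl rfl), hab'⟩,
          Or.inl ⟨(by omega : i + 1 ≤ i + 1), (by omega : i + k ≤ i + k + 1)⟩⟩
    · exact Relation.ReflTransGen.refl
end

section
/- Let C be a category of fibrant objects: C has finite products and a terminal object, and is equipped with classes of morphisms called weak equivalences (containing all isomorphisms and satisfying 2-out-of-3) and fibrations (containing all isomorphisms, closed under composition and under base change along arbitrary morphisms, with all such pullbacks existing), such that trivial fibrations (fibrations which are weak equivalences) are stable under base change, every object is fibrant (the map to the terminal object is a fibration), and every object X has a path object: a factorization of the diagonal X → X × X as a weak equivalence X → PX followed by a fibration PX → X × X. Then Brown's factorization lemma holds: every morphism f : X → Y of C factors as f = p ∘ i, where p is a fibration and i is a weak equivalence which admits a retraction by a trivial fibration (i.e. there is a trivial fibration q with q ∘ i = id). -/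
open CategoryTheory CategoryTheory.Limits

/-! Let `PY` be a path object for `Y`, with projections `q₁ q₂ : PY ⟶ Y`, and let `E = X ×_Y PY`
be the pullback of `q₁` along `f`. Since `q₁` has the weak equivalence `Y ⟶ PY` as a section,
it is a trivial fibration, hence so is its base change `E ⟶ X`; the map `i : X ⟶ E` induced by
`𝟙 X` and `f ≫ (Y ⟶ PY)` is a section of it, hence a weak equivalence. Finally `E ⟶ X ⨯ Y` is
a base change of the fibration `PY ⟶ Y ⨯ Y` along `f × 𝟙`, so `p = q₂ ∘ (E ⟶ PY)`, its
composite with the fibration `X ⨯ Y ⟶ Y`, is a fibration. -/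

namespace CategoryTheory

variable {C : Type*} [Category C]

lemma IsPullback.prod_lift_comp_snd {X Y Z P E : C} [HasBinaryProduct X Z]
    [HasBinaryProduct Y Z] {f : X ⟶ Y} {q : P ⟶ Y ⨯ Z} {p₁ : E ⟶ X} {p₂ : E ⟶ P}
    (pb : IsPullback p₁ p₂ f (q ≫ prod.fst)) :
    IsPullback (prod.lift p₁ (p₂ ≫ q ≫ prod.snd)) p₂ (prod.map f (𝟙 Z)) q :=
  IsPullback.of_right (by rwa [prod.lift_fst])
    (by ext <;> simp [prod.lift_fst, prod.lift_snd, pb.w]) (IsPullback.of_prod_fst_with_id f Z)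

namespace MorphismProperty

variable {F : MorphismProperty C} [F.IsStableUnderBaseChange] [HasTerminal C]

lemma prod_fst_mem {X Y : C} [HasBinaryProduct X Y] (hY : F (terminal.from Y)) :
    F (prod.fst : X ⨯ Y ⟶ X) :=
  F.of_isPullback (IsPullback.of_hasBinaryProduct' X Y).flip hY

lemma prod_snd_mem {X Y : C} [HasBinaryProduct X Y] (hX : F (terminal.from X)) :
    F (prod.snd : X ⨯ Y ⟶ Y) :=
  F.of_isPullback (IsPullback.of_hasBinaryProduct' X Y) hX

lemma comp_prod_snd_mem_of_isPullback [F.IsStableUnderComposition] {X Y Z P E : C}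
    [HasBinaryProduct X Z] [HasBinaryProduct Y Z] {f : X ⟶ Y} {q : P ⟶ Y ⨯ Z} {p₁ : E ⟶ X}
    {p₂ : E ⟶ P} (pb : IsPullback p₁ p₂ f (q ≫ prod.fst)) (hq : F q)
    (hX : F (terminal.from X)) : F (p₂ ≫ q ≫ prod.snd) := by
  have hlift : F (prod.lift p₁ (p₂ ≫ q ≫ prod.snd)) :=
    F.of_isPullback pb.prod_lift_comp_snd.flip hq
  simpa [prod.lift_snd] using F.comp_mem _ _ hlift (prod_snd_mem hX)

end MorphismProperty

end CategoryTheory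

theorem stmt15_general {C : Type*} [Category C] [HasTerminal C] [HasBinaryProducts C]
    (Weq Fib : MorphismProperty C)
    -- weak equivalences contain isomorphisms and satisfy 2-out-of-3
    (Weq_iso : ∀ {X Y : C} (f : X ⟶ Y), IsIso f → Weq f)
    (Weq_cancelLeft : ∀ {X Y Z : C} (f : X ⟶ Y) (g : Y ⟶ Z), Weq f → Weq (f ≫ g) → Weq g)
    (Weq_cancelRight : ∀ {X Y Z : C} (f : X ⟶ Y) (g : Y ⟶ Z), Weq g → Weq (f ≫ g) → Weq f)
    -- fibrations contain isomorphisms and are closed under composition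
    (Fib_comp : ∀ {X Y Z : C} (f : X ⟶ Y) (g : Y ⟶ Z), Fib f → Fib g → Fib (f ≫ g))
    -- pullbacks of fibrations along arbitrary morphisms exist
    (pb_exists : ∀ {a b x : C} (m : a ⟶ b) (h : x ⟶ b), Fib m →
      ∃ (P : C) (p₁ : P ⟶ x) (p₂ : P ⟶ a), IsPullback p₁ p₂ h m)
    -- fibrations are stable under base change
    (Fib_stab : ∀ {a b x P : C} (m : a ⟶ b) (h : x ⟶ b) (p₁ : P ⟶ x) (p₂ : P ⟶ a),
      IsPullback p₁ p₂ h m → Fib m → Fib p₁)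
    -- trivial fibrations are stable under base change
    (Triv_stab : ∀ {a b x P : C} (m : a ⟶ b) (h : x ⟶ b) (p₁ : P ⟶ x) (p₂ : P ⟶ a),
      IsPullback p₁ p₂ h m → Fib m → Weq m → Fib p₁ ∧ Weq p₁)
    -- every object is fibrant
    (fibrant : ∀ X : C, Fib (terminal.from X))
    -- every object has a path object
    (path : ∀ X : C, ∃ (PX : C) (ip : X ⟶ PX) (q : PX ⟶ X ⨯ X),
      Weq ip ∧ Fib q ∧ ip ≫ q = diag X) :
    -- conclusion: every morphism factors as a weak equivalence (with a retraction
    -- by a trivial fibration) followed by a fibration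
    ∀ {X Y : C} (f : X ⟶ Y), ∃ (E : C) (i : X ⟶ E) (p : E ⟶ Y),
      Fib p ∧ Weq i ∧ (∃ q : E ⟶ X, Fib q ∧ Weq q ∧ i ≫ q = 𝟙 X) ∧ i ≫ p = f := by
  have : Fib.IsStableUnderComposition := ⟨Fib_comp⟩
  have : Fib.IsStableUnderBaseChange := ⟨fun sq => Fib_stab _ _ _ _ sq.flip⟩
  intro X Y f
  obtain ⟨PY, ι, q, hι, hq, hfac⟩ := path Y
  have ι_fst : ι ≫ q ≫ prod.fst = 𝟙 Y := by simp [reassoc_of% hfac, prod.lift_fst]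
  have ι_snd : ι ≫ q ≫ prod.snd = 𝟙 Y := by simp [reassoc_of% hfac, prod.lift_snd]
  have hq₁_fib : Fib (q ≫ prod.fst) :=
    Fib.comp_mem _ _ hq (MorphismProperty.prod_fst_mem (fibrant Y))
  have hq₁_weq : Weq (q ≫ prod.fst) := Weq_cancelLeft _ _ hι (ι_fst ▸ Weq_iso _ inferInstance)
  obtain ⟨E, p₁, p₂, pb⟩ := pb_exists _ f hq₁_fib
  obtain ⟨hp₁_fib, hp₁_weq⟩ := Triv_stab _ _ _ _ pb hq₁_fib hq₁_weq
  let i : X ⟶ E := pb.lift (𝟙 X) (f ≫ ι) (by simp [ι_fst])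
  have i_p₁ : i ≫ p₁ = 𝟙 X := pb.lift_fst _ _ _
  refine ⟨E, i, p₂ ≫ q ≫ prod.snd,
    MorphismProperty.comp_prod_snd_mem_of_isPullback pb hq (fibrant X),
    Weq_cancelRight _ _ hp₁_weq (i_p₁ ▸ Weq_iso _ inferInstance),
    ⟨p₁, hp₁_fib, hp₁_weq, i_p₁⟩, by simp [i, ι_snd]⟩

/-- Brown's factorization lemma in a category of fibrant objects. -/
theorem stmt15 {C : Type*} [Category C] [HasTerminal C] [HasBinaryProducts C]
    (Weq Fib : MorphismProperty C)
    -- weak equivalences contain isomorphisms and satisfy 2-out-of-3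
    (Weq_iso : ∀ {X Y : C} (f : X ⟶ Y), IsIso f → Weq f)
    (Weq_comp : ∀ {X Y Z : C} (f : X ⟶ Y) (g : Y ⟶ Z), Weq f → Weq g → Weq (f ≫ g))
    (Weq_cancelLeft : ∀ {X Y Z : C} (f : X ⟶ Y) (g : Y ⟶ Z), Weq f → Weq (f ≫ g) → Weq g)
    (Weq_cancelRight : ∀ {X Y Z : C} (f : X ⟶ Y) (g : Y ⟶ Z), Weq g → Weq (f ≫ g) → Weq f)
    -- fibrations contain isomorphisms and are closed under composition
    (Fib_iso : ∀ {X Y : C} (f : X ⟶ Y), IsIso f → Fib f)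
    (Fib_comp : ∀ {X Y Z : C} (f : X ⟶ Y) (g : Y ⟶ Z), Fib f → Fib g → Fib (f ≫ g))
    -- pullbacks of fibrations along arbitrary morphisms exist
    (pb_exists : ∀ {a b x : C} (m : a ⟶ b) (h : x ⟶ b), Fib m →
      ∃ (P : C) (p₁ : P ⟶ x) (p₂ : P ⟶ a), IsPullback p₁ p₂ h m)
    -- fibrations are stable under base change
    (Fib_stab : ∀ {a b x P : C} (m : a ⟶ b) (h : x ⟶ b) (p₁ : P ⟶ x) (p₂ : P ⟶ a),
      IsPullback p₁ p₂ h m → Fib m → Fib p₁)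
    -- trivial fibrations are stable under base change
    (Triv_stab : ∀ {a b x P : C} (m : a ⟶ b) (h : x ⟶ b) (p₁ : P ⟶ x) (p₂ : P ⟶ a),
      IsPullback p₁ p₂ h m → Fib m → Weq m → Fib p₁ ∧ Weq p₁)
    -- every object is fibrant
    (fibrant : ∀ X : C, Fib (terminal.from X))
    -- every object has a path object
    (path : ∀ X : C, ∃ (PX : C) (ip : X ⟶ PX) (q : PX ⟶ X ⨯ X),
      Weq ip ∧ Fib q ∧ ip ≫ q = diag X) :
    -- conclusion: every morphism factors as a weak equivalence (with a retraction
    -- by a trivial fibration) followed by a fibration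
    ∀ {X Y : C} (f : X ⟶ Y), ∃ (E : C) (i : X ⟶ E) (p : E ⟶ Y),
      Fib p ∧ Weq i ∧ (∃ q : E ⟶ X, Fib q ∧ Weq q ∧ i ≫ q = 𝟙 X) ∧ i ≫ p = f :=
  stmt15_general Weq Fib Weq_iso Weq_cancelLeft Weq_cancelRight Fib_comp pb_exists Fib_stab
    Triv_stab fibrant path
end

section
/- Let C be a category of fibrant objects with class of weak equivalences W and class of trivial fibrations T (fibrations that are weak equivalences). Then W equals the closure of T under the 2-out-of-3 property; consequently, the localization of C at W coincides with the localization of C at T (a functor F : C → D inverts all weak equivalences if and only if it inverts all trivial fibrations). -/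
/-!
Brown's factorization lemma: for `f : A ⟶ B` and a path object `B ⟶ PB ⟶ B ⨯ B`, the mapping
path space `P = (A ⨯ B) ×_{B ⨯ B} PB` factors `f` as `i ≫ p` with `p` a fibration and `i` a
section of a trivial fibration `r : P ⟶ A`. If `f` is a weak equivalence, 2-out-of-3 makes `i`,
hence `p`, a weak equivalence, so `f` lies in the 2-out-of-3 closure of the trivial fibrations.
Since isomorphisms satisfy 2-out-of-3, a functor inverting the trivial fibrations inverts this
closure.
-/

open CategoryTheory CategoryTheory.Limits

/-- The closure of a class of morphisms under the 2-out-of-3 property. -/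
inductive Closure23 {C : Type*} [Category C] (W : MorphismProperty C) :
    ∀ ⦃X Y : C⦄, (X ⟶ Y) → Prop
  | of {X Y : C} (f : X ⟶ Y) : W f → Closure23 W f
  | comp {X Y Z : C} (f : X ⟶ Y) (g : Y ⟶ Z) :
      Closure23 W f → Closure23 W g → Closure23 W (f ≫ g)
  | cancelLeft {X Y Z : C} (f : X ⟶ Y) (g : Y ⟶ Z) :
      Closure23 W f → Closure23 W (f ≫ g) → Closure23 W g
  | cancelRight {X Y Z : C} (f : X ⟶ Y) (g : Y ⟶ Z) :
      Closure23 W g → Closure23 W (f ≫ g) → Closure23 W f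

open MorphismProperty

namespace CategoryTheory.MorphismProperty

variable {C : Type*} [Category C] (W : MorphismProperty C)

lemma id_mem_of_mem_source [W.HasOfPostcompProperty W] {X Y : C} {f : X ⟶ Y} (hf : W f) :
    W (𝟙 X) :=
  W.of_postcomp (𝟙 X) f hf (by simpa using hf)

lemma id_mem_of_mem_target [W.HasOfPrecompProperty W] {X Y : C} {f : X ⟶ Y} (hf : W f) :
    W (𝟙 Y) :=
  W.of_precomp f (𝟙 Y) hf (by simpa using hf)

variable [W.HasOfPostcompProperty W] [W.HasOfPrecompProperty W] {X Y : C} {s : X ⟶ Y} {r : Y ⟶ X}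

lemma mem_of_retraction_mem (h : s ≫ r = 𝟙 X) (hr : W r) : W s :=
  W.of_postcomp s r hr (h ▸ W.id_mem_of_mem_target hr)

lemma mem_of_section_mem (h : s ≫ r = 𝟙 X) (hs : W s) : W r :=
  W.of_precomp s r hs (h ▸ W.id_mem_of_mem_source hs)

end CategoryTheory.MorphismProperty

namespace Closure23

variable {C : Type*} [Category C] {W : MorphismProperty C}

instance : HasOfPostcompProperty (Closure23 W) (Closure23 W) := ⟨.cancelRight⟩
instance : HasOfPrecompProperty (Closure23 W) (Closure23 W) := ⟨.cancelLeft⟩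

lemma le_self : W ≤ Closure23 W := fun _ _ => .of

lemma le_of_le {W' : MorphismProperty C} [W'.HasTwoOutOfThreeProperty] (h : W ≤ W') :
    Closure23 W ≤ W' := by
  intro _ _ f hf
  induction hf with
  | of f hf => exact h f hf
  | comp f g _ _ hf hg => exact W'.comp_mem f g hf hg
  | cancelLeft f g _ _ hf hfg => exact W'.of_precomp f g hf hfg
  | cancelRight f g _ _ hg hfg => exact W'.of_postcomp f g hg hfg

lemma isInvertedBy_iff {D : Type*} [Category D] (F : C ⥤ D) :
    IsInvertedBy (Closure23 W) F ↔ W.IsInvertedBy F :=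
  ⟨fun h => le_self.trans h, le_of_le (W' := (isomorphisms D).inverseImage F)⟩

end Closure23

section FibrantObjects

variable {C : Type*} [Category C] [HasTerminal C] [HasBinaryProducts C]
  {Weq Fib : MorphismProperty C} [Fib.IsStableUnderBaseChange]

lemma prod_fst_mem (fibrant : ∀ X : C, Fib (terminal.from X))
    (X Y : C) : Fib (prod.fst : X ⨯ Y ⟶ X) :=
  Fib.of_isPullback (IsPullback.of_hasBinaryProduct' X Y).flip (fibrant Y)

lemma prod_snd_mem (fibrant : ∀ X : C, Fib (terminal.from X))
    (X Y : C) : Fib (prod.snd : X ⨯ Y ⟶ Y) :=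
  Fib.of_isPullback (IsPullback.of_hasBinaryProduct' X Y) (fibrant X)

variable [Fib.IsStableUnderComposition]
  [Weq.HasOfPostcompProperty Weq] [Weq.HasOfPrecompProperty Weq]

lemma path_fst_mem_trivialFibrations (fibrant : ∀ X : C, Fib (terminal.from X))
    {B PB : C} {ι : B ⟶ PB} {q : PB ⟶ B ⨯ B} (hι : Weq ι) (hq : Fib q) (hιq : ι ≫ q = diag B) :
    (Fib ⊓ Weq) (q ≫ prod.fst) :=
  ⟨Fib.comp_mem _ _ hq (prod_fst_mem fibrant B B),
    Weq.mem_of_section_mem (s := ι) (by simp [reassoc_of% hιq, diag, prod.lift_fst]) hι⟩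

variable [(Fib ⊓ Weq).IsStableUnderBaseChange]

lemma exists_brown_factorization
    (pb_exists : ∀ {a b x : C} (m : a ⟶ b) (h : x ⟶ b), Fib m →
      ∃ (P : C) (p₁ : P ⟶ x) (p₂ : P ⟶ a), IsPullback p₁ p₂ h m)
    (fibrant : ∀ X : C, Fib (terminal.from X))
    {B PB : C} {ι : B ⟶ PB} {q : PB ⟶ B ⨯ B} (hι : Weq ι) (hq : Fib q) (hιq : ι ≫ q = diag B)
    {A : C} (f : A ⟶ B) :
    ∃ (P : C) (i : A ⟶ P) (r : P ⟶ A) (p : P ⟶ B),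
      i ≫ r = 𝟙 A ∧ i ≫ p = f ∧ (Fib ⊓ Weq) r ∧ Fib p := by
  obtain ⟨P, pr, ev, hP⟩ := pb_exists q (prod.map f (𝟙 B)) hq
  -- `r = pr ≫ prod.fst` is the base change along `f` of the trivial fibration `q ≫ prod.fst`
  have hr : (Fib ⊓ Weq) (pr ≫ prod.fst) :=
    (Fib ⊓ Weq).of_isPullback (hP.paste_horiz (IsPullback.of_prod_fst_with_id f B)).flip
      (path_fst_mem_trivialFibrations fibrant hι hq hιq)
  have hp : Fib (pr ≫ prod.snd) :=
    Fib.comp_mem _ _ (Fib.of_isPullback hP.flip hq) (prod_snd_mem fibrant A B)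
  refine ⟨P, hP.lift (prod.lift (𝟙 A) f) (f ≫ ι) ?_, pr ≫ prod.fst, pr ≫ prod.snd,
    ?_, ?_, hr, hp⟩
  · ext <;> simp [reassoc_of% hιq, diag, prod.lift_fst, prod.lift_snd]
  · simp [prod.lift_fst]
  · simp [prod.lift_snd]

lemma weq_eq_closure23_trivialFibrations [Weq.IsStableUnderComposition]
    (pb_exists : ∀ {a b x : C} (m : a ⟶ b) (h : x ⟶ b), Fib m →
      ∃ (P : C) (p₁ : P ⟶ x) (p₂ : P ⟶ a), IsPullback p₁ p₂ h m)
    (fibrant : ∀ X : C, Fib (terminal.from X))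
    (path : ∀ X : C, ∃ (PX : C) (ip : X ⟶ PX) (q : PX ⟶ X ⨯ X),
      Weq ip ∧ Fib q ∧ ip ≫ q = diag X) :
    Weq = Closure23 (Fib ⊓ Weq) := by
  have : Weq.HasTwoOutOfThreeProperty := {}
  refine le_antisymm (fun A B f hf => ?_) (Closure23.le_of_le inf_le_right)
  obtain ⟨PB, ι, q, hι, hq, hιq⟩ := path B
  obtain ⟨P, i, r, p, hir, rfl, hr, hp⟩ :=
    exists_brown_factorization pb_exists fibrant hι hq hιq f
  have hp' : Weq p := Weq.of_precomp i p (Weq.mem_of_retraction_mem hir hr.2) hf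
  exact .comp i p (mem_of_retraction_mem (Closure23 _) hir (.of r hr)) (.of p ⟨hp, hp'⟩)

end FibrantObjects

theorem stmt16_general {C : Type*} [Category C] [HasTerminal C] [HasBinaryProducts C]
    (Weq Fib : MorphismProperty C)
    (Weq_comp : ∀ {X Y Z : C} (f : X ⟶ Y) (g : Y ⟶ Z), Weq f → Weq g → Weq (f ≫ g))
    (Weq_cancelLeft : ∀ {X Y Z : C} (f : X ⟶ Y) (g : Y ⟶ Z), Weq f → Weq (f ≫ g) → Weq g)
    (Weq_cancelRight : ∀ {X Y Z : C} (f : X ⟶ Y) (g : Y ⟶ Z), Weq g → Weq (f ≫ g) → Weq f)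
    (Fib_comp : ∀ {X Y Z : C} (f : X ⟶ Y) (g : Y ⟶ Z), Fib f → Fib g → Fib (f ≫ g))
    (pb_exists : ∀ {a b x : C} (m : a ⟶ b) (h : x ⟶ b), Fib m →
      ∃ (P : C) (p₁ : P ⟶ x) (p₂ : P ⟶ a), IsPullback p₁ p₂ h m)
    (Fib_stab : ∀ {a b x P : C} (m : a ⟶ b) (h : x ⟶ b) (p₁ : P ⟶ x) (p₂ : P ⟶ a),
      IsPullback p₁ p₂ h m → Fib m → Fib p₁)
    (Triv_stab : ∀ {a b x P : C} (m : a ⟶ b) (h : x ⟶ b) (p₁ : P ⟶ x) (p₂ : P ⟶ a),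
      IsPullback p₁ p₂ h m → Fib m → Weq m → Fib p₁ ∧ Weq p₁)
    (fibrant : ∀ X : C, Fib (terminal.from X))
    (path : ∀ X : C, ∃ (PX : C) (ip : X ⟶ PX) (q : PX ⟶ X ⨯ X),
      Weq ip ∧ Fib q ∧ ip ≫ q = diag X) :
    -- W is the 2-out-of-3 closure of the trivial fibrations T
    (∀ {X Y : C} (f : X ⟶ Y),
      Weq f ↔ Closure23 (fun _ _ g => Fib g ∧ Weq g : MorphismProperty C) f) ∧
    -- a functor inverts all of W iff it inverts all of T
    (∀ {D : Type*} [Category D] (F : C ⥤ D),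
      (∀ {X Y : C} (f : X ⟶ Y), Weq f → IsIso (F.map f)) ↔
      (∀ {X Y : C} (f : X ⟶ Y), Fib f → Weq f → IsIso (F.map f))) := by
  have : Weq.IsStableUnderComposition := ⟨Weq_comp⟩
  have : Weq.HasOfPostcompProperty Weq := ⟨Weq_cancelRight⟩
  have : Weq.HasOfPrecompProperty Weq := ⟨Weq_cancelLeft⟩
  have : Fib.IsStableUnderComposition := ⟨Fib_comp⟩
  have : Fib.IsStableUnderBaseChange := ⟨fun sq => Fib_stab _ _ _ _ sq.flip⟩
  have : (Fib ⊓ Weq).IsStableUnderBaseChange :=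
    ⟨fun sq hm => Triv_stab _ _ _ _ sq.flip hm.1 hm.2⟩
  have hW := weq_eq_closure23_trivialFibrations pb_exists fibrant path
  refine ⟨fun f => ⟨fun hf => hW.le f hf, fun hf => hW.ge f hf⟩,
    fun F => ⟨fun h _ _ f _ hf => h f hf, fun h _ _ f hf => ?_⟩⟩
  exact (Closure23.isInvertedBy_iff F).2 (fun _ _ g hg => h g hg.1 hg.2) f (hW.le f hf)

/-- In a category of fibrant objects, the weak equivalences are the 2-out-of-3
closure of the trivial fibrations; consequently a functor inverts all weak
equivalences iff it inverts all trivial fibrations. -/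
theorem stmt16 {C : Type*} [Category C] [HasTerminal C] [HasBinaryProducts C]
    (Weq Fib : MorphismProperty C)
    (Weq_iso : ∀ {X Y : C} (f : X ⟶ Y), IsIso f → Weq f)
    (Weq_comp : ∀ {X Y Z : C} (f : X ⟶ Y) (g : Y ⟶ Z), Weq f → Weq g → Weq (f ≫ g))
    (Weq_cancelLeft : ∀ {X Y Z : C} (f : X ⟶ Y) (g : Y ⟶ Z), Weq f → Weq (f ≫ g) → Weq g)
    (Weq_cancelRight : ∀ {X Y Z : C} (f : X ⟶ Y) (g : Y ⟶ Z), Weq g → Weq (f ≫ g) → Weq f)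
    (Fib_iso : ∀ {X Y : C} (f : X ⟶ Y), IsIso f → Fib f)
    (Fib_comp : ∀ {X Y Z : C} (f : X ⟶ Y) (g : Y ⟶ Z), Fib f → Fib g → Fib (f ≫ g))
    (pb_exists : ∀ {a b x : C} (m : a ⟶ b) (h : x ⟶ b), Fib m →
      ∃ (P : C) (p₁ : P ⟶ x) (p₂ : P ⟶ a), IsPullback p₁ p₂ h m)
    (Fib_stab : ∀ {a b x P : C} (m : a ⟶ b) (h : x ⟶ b) (p₁ : P ⟶ x) (p₂ : P ⟶ a),
      IsPullback p₁ p₂ h m → Fib m → Fib p₁)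
    (Triv_stab : ∀ {a b x P : C} (m : a ⟶ b) (h : x ⟶ b) (p₁ : P ⟶ x) (p₂ : P ⟶ a),
      IsPullback p₁ p₂ h m → Fib m → Weq m → Fib p₁ ∧ Weq p₁)
    (fibrant : ∀ X : C, Fib (terminal.from X))
    (path : ∀ X : C, ∃ (PX : C) (ip : X ⟶ PX) (q : PX ⟶ X ⨯ X),
      Weq ip ∧ Fib q ∧ ip ≫ q = diag X) :
    -- W is the 2-out-of-3 closure of the trivial fibrations T
    (∀ {X Y : C} (f : X ⟶ Y),
      Weq f ↔ Closure23 (fun _ _ g => Fib g ∧ Weq g : MorphismProperty C) f) ∧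
    -- a functor inverts all of W iff it inverts all of T
    (∀ {D : Type*} [Category D] (F : C ⥤ D),
      (∀ {X Y : C} (f : X ⟶ Y), Weq f → IsIso (F.map f)) ↔
      (∀ {X Y : C} (f : X ⟶ Y), Fib f → Weq f → IsIso (F.map f))) :=
  stmt16_general Weq Fib Weq_comp Weq_cancelLeft Weq_cancelRight Fib_comp pb_exists Fib_stab
    Triv_stab fibrant path
end

section
/- Let C be a category, W a class of morphisms containing all identities, closed under composition, and stable under base change, and let c be an object of C. Let H(c) be the category whose objects are spans c ←^w e →^f d with w ∈ W, and whose morphisms (c ←^w e →^f d) → (c ←^{w'} e' →^{f'} d') are pairs (u : e → e', v : d → d') with w' ∘ u = w and f' ∘ u = v ∘ f. Then the functor π : H(c) → C sending a span to its endpoint d is a Grothendieck opfibration (post-composition with v : d → d' gives cocartesian lifts), and moreover every morphism of C lying in W admits cartesian lifts with arbitrary prescribed target: for α : d' → d in W and any object x = (c ←^w e →^f d) over d, the span (c ← e ×_d d' → d') with left leg the composite e ×_d d' → e →^w c is the source of a cartesian lift of α. -/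
open CategoryTheory

/-- An object of `H(c)`: a span `c ←w e →f d` with `w ∈ W`. -/
structure HObj {C : Type*} [Category C] (W : MorphismProperty C) (c : C) where
  mid : C
  tgt : C
  w : mid ⟶ c
  f : mid ⟶ tgt
  hw : W w

/-- A morphism of `H(c)`: a pair `(u, v)` with `u ≫ w' = w` and `f ≫ v = u ≫ f'`. -/
structure HHom {C : Type*} [Category C] {W : MorphismProperty C} {c : C}
    (x y : HObj W c) where
  u : x.mid ⟶ y.mid
  v : x.tgt ⟶ y.tgt
  hwl : u ≫ y.w = x.w
  hsq : x.f ≫ v = u ≫ y.f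

/-- Composition of morphisms of `H(c)`. -/
def HComp {C : Type*} [Category C] {W : MorphismProperty C} {c : C}
    {x y z : HObj W c} (φ : HHom x y) (ψ : HHom y z) : HHom x z where
  u := φ.u ≫ ψ.u
  v := φ.v ≫ ψ.v
  hwl := by rw [Category.assoc, ψ.hwl, φ.hwl]
  hsq := by rw [← Category.assoc, φ.hsq, Category.assoc, ψ.hsq, Category.assoc]


lemma HHom.ext' {C : Type*} [Category C] {W : MorphismProperty C} {c : C}
    {x y : HObj W c} {φ ψ : HHom x y} (hu : φ.u = ψ.u) (hv : φ.v = ψ.v) : φ = ψ := by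
  cases φ; cases ψ; simp_all

/-- The projection `π : H(c) → C`, `(c ←w e →f d) ↦ d`, is a Grothendieck
opfibration, and admits cartesian lifts of all morphisms in `W`. -/
theorem stmt17 {C : Type*} [Category C] (W : MorphismProperty C)
    (hid : ∀ X : C, W (𝟙 X))
    (hcomp : ∀ {X Y Z : C} (f : X ⟶ Y) (g : Y ⟶ Z), W f → W g → W (f ≫ g))
    (hstab : ∀ {a b x P : C} (m : a ⟶ b) (h : x ⟶ b) (p₁ : P ⟶ x) (p₂ : P ⟶ a),
      IsPullback p₁ p₂ h m → W m → W p₁)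
    (c : C) :
    -- cocartesian lifts: postcomposition with v gives a cocartesian lift
    (∀ (x : HObj W c) (d' : C) (v : x.tgt ⟶ d'),
      ∀ (z : HObj W c) (ψ : HHom x z) (h : d' ⟶ z.tgt), ψ.v = v ≫ h →
        ∃! χ : HHom (⟨x.mid, d', x.w, x.f ≫ v, x.hw⟩ : HObj W c) z,
          χ.v = h ∧
          HComp (⟨𝟙 x.mid, v, by simp, by simp⟩ :
            HHom x (⟨x.mid, d', x.w, x.f ≫ v, x.hw⟩ : HObj W c)) χ = ψ) ∧
    -- cartesian lifts along hypercovers, obtained by pullback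
    (∀ (x : HObj W c) (d' : C) (α : d' ⟶ x.tgt) (hα : W α)
      (P : C) (p₁ : P ⟶ x.mid) (p₂ : P ⟶ d') (hpb : IsPullback p₁ p₂ x.f α),
      ∀ (z : HObj W c) (ψ : HHom z x) (γ : z.tgt ⟶ d'), ψ.v = γ ≫ α →
        ∃! χ : HHom z
            (⟨P, d', p₁ ≫ x.w, p₂, hcomp _ _ (hstab _ _ _ _ hpb hα) x.hw⟩ : HObj W c),
          χ.v = γ ∧
          HComp χ (⟨p₁, α, rfl, hpb.w.symm⟩ :
            HHom (⟨P, d', p₁ ≫ x.w, p₂, hcomp _ _ (hstab _ _ _ _ hpb hα) x.hw⟩ : HObj W c) x)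
            = ψ) := by
  constructor
  · intro x d' v z ψ h hψ
    refine ⟨⟨ψ.u, h, ψ.hwl, by
      have := ψ.hsq
      rw [hψ] at this
      simpa using this⟩, ⟨rfl, ?_⟩, ?_⟩
    · apply HHom.ext'
      · simp [HComp]
      · simp [HComp, hψ]
    · rintro χ ⟨h1, h2⟩
      apply HHom.ext'
      · have := congrArg HHom.u h2
        simpa [HComp] using this
      · exact h1
  · intro x d' α hα P p₁ p₂ hpb z ψ γ hψ
    have hcomm : ψ.u ≫ x.f = (z.f ≫ γ) ≫ α := by
      rw [Category.assoc, ← hψ, ψ.hsq]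
    refine ⟨⟨hpb.lift ψ.u (z.f ≫ γ) hcomm, γ, ?_, (hpb.lift_snd _ _ _).symm⟩, ⟨rfl, ?_⟩, ?_⟩
    · rw [← Category.assoc, hpb.lift_fst, ψ.hwl]
    · apply HHom.ext'
      · simpa [HComp] using hpb.lift_fst _ _ _
      · simp [HComp, hψ]
    · rintro χ ⟨h1, h2⟩
      apply HHom.ext'
      · apply hpb.hom_ext
        · have := congrArg HHom.u h2
          simpa [HComp, hpb.lift_fst] using this
        · rw [hpb.lift_snd, ← χ.hsq, h1]
      · exact h1
end
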